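/- arXiv:1706.02854 — 2 statements merged into one kernel-verified Lean document; each statement's English description precedes it below -/
import Mathlib

section
/- The rule (MIX) is GK(A_m)^r-admissible; in fact, if Γ ⇒ Δ and Π ⇒ Σ are GK(A_m)^r-derivable, then rΓ, sΠ ⇒ sΣ, rΔ is GK(A_m)^r-derivable for all r, s ∈ ℕ. -/
/-- Formulas of the modal-multiplicative language ℒ_Am□ : variables, → (`imp`)
and □ (`box`). -/
inductive FormM : Type
  | var : ℕ → FormM
  | imp : FormM → FormM → FormM
  | box : FormM → FormM
  deriving DecidableEq

/-- The defined constant `0̄ := p₀ → p₀` (with `p₀` the variable of index 0). -/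
def zeroM : FormM := .imp (.var 0) (.var 0)

/-- The defined negation `¬φ := φ → 0̄`. -/
def negM (φ : FormM) : FormM := .imp φ zeroM

/-- The defined connective `φ & ψ := ¬φ → ψ`. -/
def conjM (φ ψ : FormM) : FormM := .imp (negM φ) ψ

/-- The iterated conjunctions: `0φ := 0̄` and `(n+1)φ := φ & (nφ)`. -/
def iterM : ℕ → FormM → FormM
  | 0, _ => zeroM
  | n + 1, φ => conjM φ (iterM n φ)

/-- A K(A)-model: a nonempty set of worlds, an accessibility relation, and a
valuation of the variables bounded by some `r ≥ 0`. -/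
structure KAModel where
  World : Type
  ne : Nonempty World
  R : World → World → Prop
  V : ℕ → World → ℝ
  r : ℝ
  hr : 0 ≤ r
  hV : ∀ p x, V p x ∈ Set.Icc (-r) r

/-- The valuation extended to all ℒ_Am□-formulas.  Note that `sInf ∅ = 0` in `ℝ`,
matching the convention that the infimum of the empty set is `0`. -/
noncomputable def KAModel.val (M : KAModel) : FormM → M.World → ℝ
  | .var p, x => M.V p x
  | .imp φ ψ, x => M.val ψ x - M.val φ x
  | .box φ, x => sInf {v : ℝ | ∃ y, M.R x y ∧ M.val φ y = v}

/-- K(A)-validity of an ℒ_Am□-formula. -/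
def KAValid (φ : FormM) : Prop := ∀ (M : KAModel) (x : M.World), 0 ≤ M.val φ x

/-- A sequent: an ordered pair of finite multisets of ℒ_Am□-formulas. -/
abbrev SeqM := Multiset FormM × Multiset FormM

/-- The restricted calculus GK(A_m)^r, with rules (ID), (→⇒), (⇒→) and
(□_{k,n}). -/
inductive GKAmR : SeqM → Prop
  | id (Δ : Multiset FormM) : GKAmR (Δ, Δ)
  | impL {Γ Δ : Multiset FormM} {φ ψ : FormM} :
      GKAmR (Γ + {ψ}, {φ} + Δ) → GKAmR (Γ + {FormM.imp φ ψ}, Δ)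
  | impR {Γ Δ : Multiset FormM} {φ ψ : FormM} :
      GKAmR (Γ + {φ}, {ψ} + Δ) → GKAmR (Γ, {FormM.imp φ ψ} + Δ)
  | boxkn {Γ Δ : Multiset FormM} {n : ℕ} (k : ℕ) (hk : 1 ≤ k)
      (Γ₀ : Multiset FormM) (Γs : Fin n → Multiset FormM) (φs : Fin n → FormM)
      (hsplit : k • Γ = Γ₀ + ∑ i, Γs i)
      (h0 : GKAmR (Γ₀, (0 : Multiset FormM)))
      (hi : ∀ i : Fin n, GKAmR (Γs i, k • ({φs i} : Multiset FormM))) :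
      GKAmR (Δ + Γ.map FormM.box,
        (∑ i : Fin n, ({FormM.box (φs i)} : Multiset FormM)) + Δ)

/-!
Induction on both derivations. A rule at the root of one derivation is simply repeated: an
implication rule `r` (or `s`) times, a box rule once, on `r` copies of its premises. The only real
case is when both derivations end with box rules, with multipliers `k` and `k'`: they merge into a
single box rule with multiplier `k * k'`, taking the premises of the first `k'` times and those of
the second `k` times; its premise `(r * k') Γ₀, (s * k) Γ₀' ⇒` is the induction hypothesis for
the premises `Γ₀ ⇒` and `Γ₀' ⇒`.
-/

open Multiset

namespace GKAmR

theorem of_eq {Γ Δ Γ' Δ' : Multiset FormM} (h : GKAmR (Γ, Δ)) (hΓ : Γ = Γ') (hΔ : Δ = Δ') :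
    GKAmR (Γ', Δ') :=
  hΓ ▸ hΔ ▸ h

/-- (□_{k,n}) with the premises `Γᵢ ⇒ k[φᵢ]` given as a multiset of pairs `(Γᵢ, φᵢ)`, so that
instances of the rule can be scaled and added. -/
theorem boxkn_multiset {Γ Δ Γ₀ : Multiset FormM} (k : ℕ) (hk : 1 ≤ k)
    (P : Multiset (Multiset FormM × FormM)) (hsplit : k • Γ = Γ₀ + (P.map Prod.fst).sum)
    (h0 : GKAmR (Γ₀, 0)) (hP : ∀ p ∈ P, GKAmR (p.1, k • {p.2})) :
    GKAmR (Δ + Γ.map .box, P.map (.box ∘ Prod.snd) + Δ) := by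
  rw [← sum_map_singleton (P.map _), map_map]
  obtain ⟨l, rfl⟩ := Quot.exists_rep P
  have := GKAmR.boxkn (Γ := Γ) (Δ := Δ) k hk Γ₀ (fun i : Fin l.length => l[i].1)
    (fun i => l[i].2) (by simpa using hsplit) h0 (fun i => hP _ (List.getElem_mem _))
  simpa [Function.comp_def, Fin.sum_univ_fun_getElem l fun p => ({p.2.box} : Multiset FormM)]
    using this

theorem induction_multiset
    {motive : (Γ Δ : Multiset FormM) → GKAmR (Γ, Δ) → Prop}
    (id : ∀ Δ, motive Δ Δ (id Δ))
    (impL : ∀ {Γ Δ φ ψ} (h : GKAmR (Γ + {ψ}, {φ} + Δ)), motive _ _ h → motive _ _ (impL h))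
    (impR : ∀ {Γ Δ φ ψ} (h : GKAmR (Γ + {φ}, {ψ} + Δ)), motive _ _ h → motive _ _ (impR h))
    (box : ∀ {Γ Δ Γ₀ : Multiset FormM} (k : ℕ) (hk : 1 ≤ k)
      (P : Multiset (Multiset FormM × FormM)) (hsplit : k • Γ = Γ₀ + (P.map Prod.fst).sum)
      (h0 : GKAmR (Γ₀, 0))
      (hP : ∀ p ∈ P, GKAmR (p.1, k • {p.2})), motive _ _ h0 → (∀ p hp, motive _ _ (hP p hp)) →
      motive _ _ (boxkn_multiset (Δ := Δ) k hk P hsplit h0 hP))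
    {Γ Δ : Multiset FormM} (h : GKAmR (Γ, Δ)) : motive Γ Δ h := by
  suffices ∀ S (h : GKAmR S), motive S.1 S.2 h from this _ h
  intro S h
  induction h with
  | id Δ => exact id Δ
  | impL h ih => exact impL h ih
  | impR h ih => exact impR h ih
  | @boxkn Γ Δ n k hk Γ₀ Γs φs hsplit h0 hi ih0 ihi =>
    let P := (Finset.univ : Finset (Fin n)).val.map fun i => (Γs i, φs i)
    have hmem : ∀ p ∈ P, ∃ i, (Γs i, φs i) = p := by simp [P]
    have hΓs : ∑ i, Γs i = (P.map Prod.fst).sum := by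
      simp only [P, Finset.sum_eq_multiset_sum, map_map, Function.comp_def]
    have hφs : ∑ i, ({(φs i).box} : Multiset FormM) = P.map (.box ∘ Prod.snd) := by
      rw [← sum_map_singleton (P.map _)]
      simp only [P, map_map, Function.comp_def, Finset.sum_eq_multiset_sum]
    have := box (Δ := Δ) k hk P (hΓs ▸ hsplit) h0
      (fun p hp => by obtain ⟨i, rfl⟩ := hmem p hp; exact hi i)
      ih0 (fun p hp => by obtain ⟨i, rfl⟩ := hmem p hp; exact ihi i)
    convert this using 2

theorem impL_nsmul {Γ Δ X Y : Multiset FormM} {φ ψ : FormM} (r : ℕ)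
    (h : GKAmR (r • (Γ + {ψ}) + X, r • ({φ} + Δ) + Y)) :
    GKAmR (r • (Γ + {.imp φ ψ}) + X, r • Δ + Y) := by
  induction r generalizing X Y with
  | zero => simpa using h
  | succ r ih =>
    have h' : GKAmR (r • (Γ + {ψ}) + (Γ + {ψ} + X), r • ({φ} + Δ) + ({φ} + Δ + Y)) :=
      h.of_eq (by module) (by module)
    have := ih h'
    exact (impL (φ := φ) (ψ := ψ) (Γ := r • (Γ + {.imp φ ψ}) + Γ + X) (Δ := r • Δ + Δ + Y)
      (this.of_eq (by module) (by module))).of_eq (by module) (by module)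

theorem impR_nsmul {Γ Δ X Y : Multiset FormM} {φ ψ : FormM} (r : ℕ)
    (h : GKAmR (r • (Γ + {φ}) + X, r • ({ψ} + Δ) + Y)) :
    GKAmR (r • Γ + X, r • ({.imp φ ψ} + Δ) + Y) := by
  induction r generalizing X Y with
  | zero => simpa using h
  | succ r ih =>
    have h' : GKAmR (r • (Γ + {φ}) + (Γ + {φ} + X), r • ({ψ} + Δ) + ({ψ} + Δ + Y)) :=
      h.of_eq (by module) (by module)
    have := ih h'
    exact (impR (φ := φ) (ψ := ψ) (Γ := r • Γ + Γ + X) (Δ := r • ({.imp φ ψ} + Δ) + Δ + Y)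
      (this.of_eq (by module) (by module))).of_eq (by module) (by module)

theorem add_both {Γ Δ : Multiset FormM} (h : GKAmR (Γ, Δ)) (W : Multiset FormM) :
    GKAmR (Γ + W, Δ + W) := by
  induction h using induction_multiset with
  | id Δ => exact id _
  | impL _ ih =>
    exact (impL (ih.of_eq (add_right_comm ..) (add_assoc ..))).of_eq (add_right_comm ..) rfl
  | impR _ ih =>
    exact (impR (ih.of_eq (add_right_comm ..) (add_assoc ..))).of_eq rfl (add_assoc ..).symm
  | @box Γ Δ Γ₀ k hk P hsplit h0 hP _ _ =>
    exact (boxkn_multiset (Δ := Δ + W) k hk P hsplit h0 hP).of_eq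
      (add_right_comm ..) (add_assoc ..).symm

theorem nsmul {Γ Δ : Multiset FormM} (h : GKAmR (Γ, Δ)) (m : ℕ) : GKAmR (m • Γ, m • Δ) := by
  induction h using induction_multiset with
  | id Δ => exact id _
  | impL _ ih => simpa using impL_nsmul (X := 0) (Y := 0) m (by simpa using ih)
  | impR _ ih => simpa using impR_nsmul (X := 0) (Y := 0) m (by simpa using ih)
  | @box Γ Δ Γ₀ k hk P hsplit _ hP ih0 _ =>
    have hsplit' : k • m • Γ = m • Γ₀ + ((m • P).map Prod.fst).sum := by
      rw [map_nsmul, sum_nsmul, smul_comm, hsplit, smul_add]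
    have := boxkn_multiset (Δ := m • Δ) k hk (m • P) hsplit' (by simpa using ih0)
      (fun p hp => hP p (mem_of_mem_nsmul hp))
    exact this.of_eq (by rw [map_nsmul, smul_add]) (by rw [map_nsmul, smul_add])

theorem boxkn_multiset_mix {Γ Δ Γ₀ Γ' Δ' Γ₀' : Multiset FormM} {k k' : ℕ}
    (hk : 1 ≤ k) (hk' : 1 ≤ k') {P P' : Multiset (Multiset FormM × FormM)}
    (hsplit : k • Γ = Γ₀ + (P.map Prod.fst).sum) (hsplit' : k' • Γ' = Γ₀' + (P'.map Prod.fst).sum)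
    (hP : ∀ p ∈ P, GKAmR (p.1, k • {p.2})) (hP' : ∀ p ∈ P', GKAmR (p.1, k' • {p.2}))
    (r s : ℕ) (h0 : GKAmR ((r * k') • Γ₀ + (s * k) • Γ₀', 0)) :
    GKAmR (r • (Δ + Γ.map .box) + s • (Δ' + Γ'.map .box),
      r • (P.map (.box ∘ Prod.snd) + Δ) + s • (P'.map (.box ∘ Prod.snd) + Δ')) := by
  let Q := r • P.map (fun p => (k' • p.1, p.2)) + s • P'.map (fun p => (k • p.1, p.2))
  have hsplitQ :
      (k * k') • (r • Γ + s • Γ') = (r * k') • Γ₀ + (s * k) • Γ₀' + (Q.map Prod.fst).sum :=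
    calc (k * k') • (r • Γ + s • Γ') = (r * k') • (k • Γ) + (s * k) • (k' • Γ') := by module
      _ = _ := by
        simp only [Q, hsplit, hsplit', map_add, map_nsmul, map_map, sum_add, sum_nsmul,
          Function.comp_def, sum_map_nsmul]
        module
  have hQ : ∀ q ∈ Q, GKAmR (q.1, (k * k') • {q.2}) := by
    simp only [Q, mem_add]
    rintro _ (hq | hq) <;> obtain ⟨p, hp, rfl⟩ := mem_map.mp (mem_of_mem_nsmul hq)
    · exact (nsmul (hP p hp) k').of_eq rfl (by rw [smul_smul, mul_comm])
    · exact (nsmul (hP' p hp) k).of_eq rfl (by rw [smul_smul])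
  have := boxkn_multiset (Δ := r • Δ + s • Δ') (k * k') (one_le_mul hk hk') Q hsplitQ h0 hQ
  refine this.of_eq ?_ ?_ <;>
    simp only [Q, map_add, map_nsmul, map_map, Function.comp_def, smul_add] <;> abel

theorem mix {Γ Δ Θ Λ : Multiset FormM} (h1 : GKAmR (Γ, Δ)) (h2 : GKAmR (Θ, Λ)) (r s : ℕ) :
    GKAmR (r • Γ + s • Θ, r • Δ + s • Λ) := by
  induction h1 using induction_multiset generalizing Θ Λ r s with
  | id Δ => exact (add_both (nsmul h2 s) (r • Δ)).of_eq (add_comm ..) (add_comm ..)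
  | impL _ ih => exact impL_nsmul r (ih h2 r s)
  | impR _ ih => exact impR_nsmul r (ih h2 r s)
  | @box Γ Δ Γ₀ k hk P hsplit h0 hP ih0 _ =>
    induction h2 using induction_multiset generalizing r s with
    | id W => exact add_both (nsmul (boxkn_multiset k hk P hsplit h0 hP) r) (s • W)
    | impL _ ih =>
      exact (impL_nsmul s ((ih r s).of_eq (add_comm ..) (add_comm ..))).of_eq
        (add_comm ..) (add_comm ..)
    | impR _ ih =>
      exact (impR_nsmul s ((ih r s).of_eq (add_comm ..) (add_comm ..))).of_eq
        (add_comm ..) (add_comm ..)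
    | box k' hk' P' hsplit' h0' hP' _ _ =>
      exact boxkn_multiset_mix hk hk' hsplit hsplit' hP hP' r s
        (by simpa using ih0 h0' (r * k') (s * k))

end GKAmR

/-- The rule (MIX) is GK(A_m)^r-admissible; in fact, if Γ ⇒ Δ and
Θ ⇒ Λ are GK(A_m)^r-derivable, then rΓ, sΘ ⇒ sΛ, rΔ is GK(A_m)^r-derivable for
all r, s ∈ ℕ. -/
theorem stmt_9 (Γ Δ Θ Λ : Multiset FormM)
    (h1 : GKAmR (Γ, Δ)) (h2 : GKAmR (Θ, Λ)) (r s : ℕ) :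
    GKAmR (r • Γ + s • Θ, s • Λ + r • Δ) :=
  (GKAmR.mix h1 h2 r s).of_eq rfl (add_comm ..)
end

section
/- Separation lemma: let Γ, Π ⇒ Σ, Δ be a K(A)-valid sequent such that no propositional variable occurs both in some formula of Γ ⊎ Δ and in some formula of Π ⊎ Σ. Then the sequents Γ ⇒ Δ and Π ⇒ Σ are both K(A)-valid. -/
/-- `bigConj [φ₁, …, φₙ] = φ₁ & … & φₙ`, with the empty list interpreted as 0̄. -/
def bigConj : List FormM → FormM
  | [] => zeroM
  | [φ] => φ
  | φ :: ψ :: rest => conjM φ (bigConj (ψ :: rest))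

/-- The formula interpretation `I(Γ ⇒ Δ) := (&Γ) → (&Δ)` of a sequent. -/
def interp (Γ Δ : List FormM) : FormM := .imp (bigConj Γ) (bigConj Δ)

/-- Occurrence of a propositional variable in an ℒ_Am□-formula. -/
def Occurs (p : ℕ) : FormM → Prop
  | .var q => p = q
  | .imp φ ψ => Occurs p φ ∨ Occurs p ψ
  | .box φ => Occurs p φ

/-!
Zeroing out every variable that does not occur in `Γ ++ Δ` leaves the values of the formulas
of `Γ ++ Δ` unchanged and, by the disjointness of variables, makes every formula of `Θ ++ Λ`
take the value `0` everywhere. Since `I(Γ ⇒ Δ)` evaluates to `∑ Δ - ∑ Γ`, validity of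
`Γ, Θ ⇒ Λ, Δ` in the modified model is exactly validity of `Γ ⇒ Δ` at the given world.
-/

namespace KAModel

open Classical in
noncomputable def restrict (M : KAModel) (S : ℕ → Prop) : KAModel where
  World := M.World
  ne := M.ne
  R := M.R
  V := fun p x => if S p then M.V p x else 0
  r := M.r
  hr := M.hr
  hV p x := by
    split_ifs
    · exact M.hV p x
    · exact ⟨neg_nonpos.2 M.hr, M.hr⟩

variable (M : KAModel)

lemma val_zeroM (x : M.World) : M.val zeroM x = 0 := by
  simp [zeroM, val]

lemma val_conjM (φ ψ : FormM) (x : M.World) :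
    M.val (conjM φ ψ) x = M.val φ x + M.val ψ x := by
  simp only [conjM, negM, val, val_zeroM]
  ring

lemma val_bigConj : ∀ (L : List FormM) (x : M.World),
    M.val (bigConj L) x = (L.map (M.val · x)).sum
  | [], x => by simp [bigConj, val_zeroM]
  | [φ], x => by simp [bigConj]
  | φ :: ψ :: rest, x => by
    simp only [bigConj, val_conjM, val_bigConj (ψ :: rest), List.map_cons, List.sum_cons]

lemma val_interp (Γ Δ : List FormM) (x : M.World) :
    M.val (interp Γ Δ) x = (Δ.map (M.val · x)).sum - (Γ.map (M.val · x)).sum := by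
  rw [interp, val, val_bigConj, val_bigConj]

lemma val_restrict_of_forall_occurs {S : ℕ → Prop} {φ : FormM}
    (h : ∀ p, Occurs p φ → S p) (x : M.World) : (M.restrict S).val φ x = M.val φ x := by
  induction φ generalizing x with
  | var p => simp [val, restrict, h p rfl]
  | imp φ ψ ihφ ihψ =>
    simp only [val, ihφ (fun p hp => h p (Or.inl hp)), ihψ (fun p hp => h p (Or.inr hp))]
  | box φ ih =>
    simp only [val]
    congr 1
    ext v
    exact exists_congr fun y => and_congr Iff.rfl (by rw [ih h y])

lemma val_restrict_eq_zero {S : ℕ → Prop} {φ : FormM}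
    (h : ∀ p, Occurs p φ → ¬ S p) (x : M.World) : (M.restrict S).val φ x = 0 := by
  induction φ generalizing x with
  | var p => simp [val, restrict, h p rfl]
  | imp φ ψ ihφ ihψ =>
    simp only [val, ihφ (fun p hp => h p (Or.inl hp)), ihψ (fun p hp => h p (Or.inr hp)),
      sub_zero]
  | box φ ih =>
    have hsub : {v : ℝ | ∃ y, (M.restrict S).R x y ∧ (M.restrict S).val φ y = v} ⊆ {0} := by
      rintro v ⟨y, -, rfl⟩
      exact ih h y
    simp only [val]
    rcases Set.subset_singleton_iff_eq.1 hsub with he | he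
    · rw [he, Real.sInf_empty]
    · rw [he, csInf_singleton]

end KAModel

open KAModel

lemma KAValid.interp_perm {Γ Γ' Δ Δ' : List FormM} (hΓ : Γ.Perm Γ') (hΔ : Δ.Perm Δ')
    (h : KAValid (interp Γ Δ)) : KAValid (interp Γ' Δ') := by
  intro M x
  rw [val_interp, ← (hΓ.map _).sum_eq, ← (hΔ.map _).sum_eq, ← val_interp]
  exact h M x

lemma KAValid.interp_left_of_disjoint {Γ Θ Λ Δ : List FormM}
    (hdisj : ∀ p : ℕ,
      ¬ ((∃ φ ∈ Γ ++ Δ, Occurs p φ) ∧ (∃ φ ∈ Θ ++ Λ, Occurs p φ)))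
    (hvalid : KAValid (interp (Γ ++ Θ) (Λ ++ Δ))) :
    KAValid (interp Γ Δ) := by
  intro M x
  let N := M.restrict fun p => ∃ φ ∈ Γ ++ Δ, Occurs p φ
  have hkept {L : List FormM} (hL : L ⊆ Γ ++ Δ) :
      (L.map (N.val · x)).sum = (L.map (M.val · x)).sum :=
    congrArg List.sum <| List.map_congr_left fun φ hφ =>
      M.val_restrict_of_forall_occurs (fun p hp => ⟨φ, hL hφ, hp⟩) x
  have hzeroed {L : List FormM} (hL : L ⊆ Θ ++ Λ) : (L.map (N.val · x)).sum = 0 :=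
    List.sum_eq_zero fun _ hv => by
      obtain ⟨φ, hφ, rfl⟩ := List.mem_map.1 hv
      exact M.val_restrict_eq_zero (fun p hp hS => hdisj p ⟨hS, φ, hL hφ, hp⟩) x
  have key := hvalid N x
  rw [val_interp N _ _ x, List.map_append, List.map_append, List.sum_append, List.sum_append,
    hkept (L := Γ) (by simp), hkept (L := Δ) (by simp), hzeroed (L := Θ) (by simp),
    hzeroed (L := Λ) (by simp)] at key
  rw [val_interp]
  linarith

/-- Separation lemma: if Γ, Θ ⇒ Λ, Δ is K(A)-valid and no
variable occurs both in a formula of Γ ⊎ Δ and in a formula of Θ ⊎ Λ, then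
Γ ⇒ Δ and Θ ⇒ Λ are both K(A)-valid. -/
theorem stmt_13 (Γ Θ Λ Δ : List FormM)
    (hdisj : ∀ p : ℕ,
      ¬ ((∃ φ ∈ Γ ++ Δ, Occurs p φ) ∧ (∃ φ ∈ Θ ++ Λ, Occurs p φ)))
    (hvalid : KAValid (interp (Γ ++ Θ) (Λ ++ Δ))) :
    KAValid (interp Γ Δ) ∧ KAValid (interp Θ Λ) :=
  ⟨hvalid.interp_left_of_disjoint hdisj,
    (hvalid.interp_perm List.perm_append_comm List.perm_append_comm).interp_left_of_disjoint
      fun p h => hdisj p h.symm⟩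
end
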